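/- Let A = P₁ + P₂ with P₁, P₂ positive semidefinite, Σ Hermitian positive definite, and P̃ᵢ = Σ^{-1/2}PᵢΣ^{-1/2}, Ã = Σ^{-1/2}AΣ^{-1/2}. For an eigenpair (λ, x) of Γ̃ = [(I + P̃₂)(I + P̃₁)]^{-1}(I - P̃₂)(I - P̃₁), one has |λ|² = (r₁(x) - r₂(x)) / (r₁(x) + r₂(x)), where r₁(x) = x*(I + Ã*Ã + P̃₂P̃₁ + P̃₁*P̃₂* + P̃₁*P̃₂*P̃₂P̃₁)x and r₂(x) = x*(Ã + Ã* + Ã*P̃₂P̃₁ + P̃₁*P̃₂*Ã)x. -/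

import Mathlib

open Matrix ComplexOrder
open scoped MatrixOrder

noncomputable def specNorm {n : ℕ} (M : Matrix (Fin n) (Fin n) ℂ) : ℝ :=
  ‖Matrix.toEuclideanCLM (𝕜 := ℂ) M‖

noncomputable def evnorm {n : ℕ} (x : Fin n → ℂ) : ℝ :=
  ‖(WithLp.equiv 2 (Fin n → ℂ)).symm x‖

/-- `P` is positive semidefinite in the (possibly non-Hermitian) sense:
`Re (x* P x) ≥ 0` for all `x`. -/
def IsPSD {n : ℕ} (P : Matrix (Fin n) (Fin n) ℂ) : Prop :=
  ∀ x : Fin n → ℂ, 0 ≤ (star x ⬝ᵥ P *ᵥ x).re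

/-- `P` is positive definite in the (possibly non-Hermitian) sense:
`Re (x* P x) > 0` for all nonzero `x`. -/
def IsPD {n : ℕ} (P : Matrix (Fin n) (Fin n) ℂ) : Prop :=
  ∀ x : Fin n → ℂ, x ≠ 0 → 0 < (star x ⬝ᵥ P *ᵥ x).re

/-- `Σ^{-1/2} P Σ^{-1/2}` where `Σ^{1/2}` is the HPD square root of the HPD matrix `Sg`. -/
noncomputable def tild {n : ℕ} (Sg P : Matrix (Fin n) (Fin n) ℂ) (hS : Sg.PosDef) :
    Matrix (Fin n) (Fin n) ℂ :=
  (CFC.sqrt Sg)⁻¹ * P * (CFC.sqrt Sg)⁻¹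


lemma quad_re_pos {n : ℕ} (v : Fin n → ℂ) (hv : v ≠ 0) : 0 < (star v ⬝ᵥ v).re := by
  obtain ⟨i, hi⟩ := Function.ne_iff.mp hv
  have : (star v ⬝ᵥ v).re = ∑ j, Complex.normSq (v j) := by
    simp [dotProduct, Complex.re_sum, Complex.normSq_eq_conj_mul_self, Complex.normSq_apply]
  rw [this]
  exact Finset.sum_pos' (fun j _ => Complex.normSq_nonneg _)
    ⟨i, Finset.mem_univ i, Complex.normSq_pos.mpr hi⟩

lemma quad_conj {n : ℕ} (M : Matrix (Fin n) (Fin n) ℂ) (x : Fin n → ℂ) :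
    star x ⬝ᵥ (Mᴴ * M) *ᵥ x = star (M *ᵥ x) ⬝ᵥ (M *ᵥ x) := by
  rw [← Matrix.mulVec_mulVec, Matrix.dotProduct_mulVec, Matrix.star_mulVec]

lemma pd_one_add {n : ℕ} (Sg P : Matrix (Fin n) (Fin n) ℂ) (hS : Sg.PosDef)
    (hP : IsPSD P) : IsPD (1 + tild Sg P hS) := by
  intro z hz
  have hSH : ((CFC.sqrt Sg)⁻¹)ᴴ = (CFC.sqrt Sg)⁻¹ := by
    rw [Matrix.conjTranspose_nonsing_inv, (Matrix.nonneg_iff_posSemidef.mp (CFC.sqrt_nonneg Sg)).1.eq]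
  have key : star z ⬝ᵥ tild Sg P hS *ᵥ z
      = star ((CFC.sqrt Sg)⁻¹ *ᵥ z) ⬝ᵥ P *ᵥ ((CFC.sqrt Sg)⁻¹ *ᵥ z) := by
    rw [Matrix.star_mulVec, hSH, tild, ← Matrix.mulVec_mulVec, ← Matrix.mulVec_mulVec,
      Matrix.dotProduct_mulVec]
  have : star z ⬝ᵥ (1 + tild Sg P hS) *ᵥ z = star z ⬝ᵥ z + star z ⬝ᵥ tild Sg P hS *ᵥ z := by
    rw [Matrix.add_mulVec, dotProduct_add, Matrix.one_mulVec]
  rw [this, Complex.add_re]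
  have h1 := quad_re_pos z hz
  have h2 : 0 ≤ (star z ⬝ᵥ tild Sg P hS *ᵥ z).re := by rw [key]; exact hP _
  linarith

lemma isUnit_of_isPD {n : ℕ} (M : Matrix (Fin n) (Fin n) ℂ) (hM : IsPD M) : IsUnit M.det := by
  by_contra h
  have hdet : M.det = 0 := by simpa [isUnit_iff_ne_zero] using h
  obtain ⟨v, hv, hMv⟩ := (Matrix.exists_mulVec_eq_zero_iff).mpr hdet
  have := hM v hv
  rw [hMv] at this
  simp at this

theorem stmt13 {n : ℕ} (P1 P2 A Sg : Matrix (Fin n) (Fin n) ℂ)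
    (hA : A = P1 + P2) (h1 : IsPSD P1) (h2 : IsPSD P2) (hS : Sg.PosDef)
    (lam : ℂ) (x : Fin n → ℂ) (hx : x ≠ 0)
    (heig : (((1 + tild Sg P2 hS) * (1 + tild Sg P1 hS))⁻¹ *
      ((1 - tild Sg P2 hS) * (1 - tild Sg P1 hS))) *ᵥ x = lam • x) :
    ‖lam‖ ^ 2 =
      ((star x ⬝ᵥ (1 + (tild Sg A hS)ᴴ * tild Sg A hS + tild Sg P2 hS * tild Sg P1 hS +
          (tild Sg P1 hS)ᴴ * (tild Sg P2 hS)ᴴ +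
          (tild Sg P1 hS)ᴴ * (tild Sg P2 hS)ᴴ * tild Sg P2 hS * tild Sg P1 hS) *ᵥ x).re -
        (star x ⬝ᵥ (tild Sg A hS + (tild Sg A hS)ᴴ +
          (tild Sg A hS)ᴴ * tild Sg P2 hS * tild Sg P1 hS +
          (tild Sg P1 hS)ᴴ * (tild Sg P2 hS)ᴴ * tild Sg A hS) *ᵥ x).re) /
      ((star x ⬝ᵥ (1 + (tild Sg A hS)ᴴ * tild Sg A hS + tild Sg P2 hS * tild Sg P1 hS +
          (tild Sg P1 hS)ᴴ * (tild Sg P2 hS)ᴴ +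
          (tild Sg P1 hS)ᴴ * (tild Sg P2 hS)ᴴ * tild Sg P2 hS * tild Sg P1 hS) *ᵥ x).re +
        (star x ⬝ᵥ (tild Sg A hS + (tild Sg A hS)ᴴ +
          (tild Sg A hS)ᴴ * tild Sg P2 hS * tild Sg P1 hS +
          (tild Sg P1 hS)ᴴ * (tild Sg P2 hS)ᴴ * tild Sg A hS) *ᵥ x).re) := by
  set T1 := tild Sg P1 hS with hT1
  set T2 := tild Sg P2 hS with hT2
  set TA := tild Sg A hS with hTAdef
  have hTA : TA = T1 + T2 := by
    simp only [hTAdef, hT1, hT2, tild, hA, Matrix.add_mul, Matrix.mul_add]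
  set Mm := (1 - T2) * (1 - T1) with hMm
  set N := (1 + T2) * (1 + T1) with hN
  -- invertibility of N
  have hpd2 : IsPD (1 + T2) := pd_one_add Sg P2 hS h2
  have hpd1 : IsPD (1 + T1) := pd_one_add Sg P1 hS h1
  have hNdet : IsUnit N.det := by
    rw [hN, Matrix.det_mul]
    exact (isUnit_of_isPD _ hpd2).mul (isUnit_of_isPD _ hpd1)
  have hNinv : N * N⁻¹ = 1 := Matrix.mul_nonsing_inv N hNdet
  have hNinv' : N⁻¹ * N = 1 := Matrix.nonsing_inv_mul N hNdet
  -- eigen relation : Mm *ᵥ x = lam • (N *ᵥ x)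
  have heq : Mm *ᵥ x = lam • (N *ᵥ x) := by
    have h := congrArg (fun w => N *ᵥ w) heig
    simp only [Matrix.mulVec_mulVec, Matrix.mulVec_smul] at h
    rwa [← Matrix.mul_assoc, hNinv, Matrix.one_mul] at h
  set u := Mm *ᵥ x with hu
  set v := N *ᵥ x with hv
  -- v ≠ 0
  have hvne : v ≠ 0 := by
    intro h0
    apply hx
    have : N⁻¹ *ᵥ v = N⁻¹ *ᵥ 0 := by rw [h0]
    rwa [hv, Matrix.mulVec_mulVec, hNinv', Matrix.one_mulVec, Matrix.mulVec_zero] at this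
  -- matrix identities
  set R1 := 1 + TAᴴ * TA + T2 * T1 + T1ᴴ * T2ᴴ + T1ᴴ * T2ᴴ * T2 * T1 with hR1
  set R2 := TA + TAᴴ + TAᴴ * T2 * T1 + T1ᴴ * T2ᴴ * TA with hR2
  have hMid : Mmᴴ * Mm = R1 - R2 := by
    simp only [hR1, hR2, hMm, hTA, Matrix.conjTranspose_mul, Matrix.conjTranspose_sub,
      Matrix.conjTranspose_add, Matrix.conjTranspose_one]
    noncomm_ring
  have hNid : Nᴴ * N = R1 + R2 := by
    simp only [hR1, hR2, hN, hTA, Matrix.conjTranspose_mul, Matrix.conjTranspose_sub,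
      Matrix.conjTranspose_add, Matrix.conjTranspose_one]
    noncomm_ring
  set a := (star x ⬝ᵥ R1 *ᵥ x).re with ha
  set b := (star x ⬝ᵥ R2 *ᵥ x).re with hb
  have hsub : a - b = (star u ⬝ᵥ u).re := by
    rw [← quad_conj Mm x, hMid, Matrix.sub_mulVec, dotProduct_sub, Complex.sub_re, ha, hb]
  have hadd : a + b = (star v ⬝ᵥ v).re := by
    rw [← quad_conj N x, hNid, Matrix.add_mulVec, dotProduct_add, Complex.add_re, ha, hb]
  set t := (star v ⬝ᵥ v).re with ht
  have htpos : 0 < t := quad_re_pos v hvne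
  have huu : (star u ⬝ᵥ u).re = ‖lam‖ ^ 2 * t := by
    rw [heq]
    have : star (lam • v) ⬝ᵥ (lam • v) = (starRingEnd ℂ lam * lam) * (star v ⬝ᵥ v) := by
      rw [star_smul, smul_dotProduct, dotProduct_smul]
      simp [smul_smul, mul_assoc]
    rw [this]
    have hcl : starRingEnd ℂ lam * lam = (‖lam‖ ^ 2 : ℝ) := by
      rw [← Complex.normSq_eq_conj_mul_self, Complex.sq_norm]
    rw [hcl, Complex.re_ofReal_mul]
  rw [hsub, huu, hadd]
  field_simp
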